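/- arXiv:math/9912062 — 2 statements merged into one kernel-verified Lean document; each statement's English description precedes it below -/
import Mathlib

section
/- Let X and Y be metric spaces with asdim X ≤ m and asdim Y ≤ n. Then the product X × Y with the ℓ∞ (max) metric satisfies asdim(X × Y) ≤ m + n + 1. (Weaker form using the cover-by-disjoint-families definition: given d > 0, from a uniformly bounded cover of X by m+1 d-disjoint families and a uniformly bounded cover of Y by n+1 d-disjoint families, one can construct a uniformly bounded cover of X × Y by (m+1)(n+1) d-disjoint families, hence asdim(X × Y) ≤ (m+1)(n+1) − 1.) -/
/-!
If `𝒰⁰, …, 𝒰ᵐ` and `𝒱⁰, …, 𝒱ⁿ` witness the asymptotic dimension bounds of `X` and `Y`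
at scale `d`, the families `{U × V | U ∈ 𝒰ⁱ, V ∈ 𝒱ʲ}` do so for `X × Y`: in the max metric
two distinct products `U × V ≠ U' × V'` from the same family differ in a factor, and
that factor alone already puts them more than `d` apart.
-/

/-- `AsdimLE n X` : the asymptotic dimension of `X` is at most `n`, via the
definition by covers splitting into `n+1` uniformly bounded `d`-disjoint families. -/
def AsdimLE (n : ℕ) (X : Type*) [MetricSpace X] : Prop :=
  ∀ d > (0 : ℝ), ∃ (𝒰 : Fin (n + 1) → Set (Set X)) (B : ℝ),
    (∀ x : X, ∃ i, ∃ U ∈ 𝒰 i, x ∈ U) ∧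
    (∀ i, ∀ U ∈ 𝒰 i, Metric.diam U ≤ B ∧ Bornology.IsBounded U) ∧
    (∀ i, ∀ U ∈ 𝒰 i, ∀ V ∈ 𝒰 i, U ≠ V → ∀ x ∈ U, ∀ y ∈ V, d < dist x y)

open Metric Set

theorem Metric.diam_prod_le_max {X Y : Type*} [PseudoMetricSpace X] [PseudoMetricSpace Y]
    {U : Set X} {V : Set Y} (hU : Bornology.IsBounded U) (hV : Bornology.IsBounded V) :
    diam (U ×ˢ V) ≤ max (diam U) (diam V) := by
  refine diam_le_of_forall_dist_le (le_max_of_le_left diam_nonneg) ?_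
  rintro ⟨x₁, y₁⟩ ⟨hx₁, hy₁⟩ ⟨x₂, y₂⟩ ⟨hx₂, hy₂⟩
  rw [Prod.dist_eq]
  exact max_le_max (dist_le_diam_of_mem hU hx₁ hx₂) (dist_le_diam_of_mem hV hy₁ hy₂)

structure IsAsdimCover {X ι : Type*} [PseudoMetricSpace X] (𝒰 : ι → Set (Set X))
    (d B : ℝ) : Prop where
  cover : ∀ x : X, ∃ i, ∃ U ∈ 𝒰 i, x ∈ U
  bounded : ∀ i, ∀ U ∈ 𝒰 i, diam U ≤ B ∧ Bornology.IsBounded U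
  separated : ∀ i, (𝒰 i).Pairwise fun U V => ∀ x ∈ U, ∀ y ∈ V, d < dist x y

namespace IsAsdimCover

variable {X Y ι κ : Type*} [PseudoMetricSpace X] [PseudoMetricSpace Y] {d B C : ℝ}

theorem comp_equiv {𝒰 : ι → Set (Set X)} (h : IsAsdimCover 𝒰 d B) (e : κ ≃ ι) :
    IsAsdimCover (𝒰 ∘ e) d B where
  cover x := by
    obtain ⟨i, hi⟩ := h.cover x
    exact ⟨e.symm i, by simpa using hi⟩
  bounded k := h.bounded (e k)
  separated k := h.separated (e k)

theorem prod {𝒰 : ι → Set (Set X)} {𝒱 : κ → Set (Set Y)} (h𝒰 : IsAsdimCover 𝒰 d B)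
    (h𝒱 : IsAsdimCover 𝒱 d C) :
    IsAsdimCover (fun p : ι × κ => image2 (· ×ˢ ·) (𝒰 p.1) (𝒱 p.2)) d (max B C) where
  cover := by
    rintro ⟨x, y⟩
    obtain ⟨i, U, hU, hxU⟩ := h𝒰.cover x
    obtain ⟨j, V, hV, hyV⟩ := h𝒱.cover y
    exact ⟨(i, j), U ×ˢ V, mem_image2_of_mem hU hV, hxU, hyV⟩
  bounded := by
    rintro p _ ⟨U, hU, V, hV, rfl⟩
    obtain ⟨hdU, hbU⟩ := h𝒰.bounded p.1 U hU
    obtain ⟨hdV, hbV⟩ := h𝒱.bounded p.2 V hV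
    exact ⟨(diam_prod_le_max hbU hbV).trans (max_le_max hdU hdV), hbU.prod hbV⟩
  separated := by
    rintro p _ ⟨U, hU, V, hV, rfl⟩ _ ⟨U', hU', V', hV', rfl⟩ hne ⟨x₁, y₁⟩ ⟨hx₁, hy₁⟩
      ⟨x₂, y₂⟩ ⟨hx₂, hy₂⟩
    rw [Prod.dist_eq]
    by_cases hUU : U = U'
    · have hVV : V ≠ V' := by rintro rfl; exact hne (by rw [hUU])
      exact lt_max_of_lt_right (h𝒱.separated p.2 hV hV' hVV y₁ hy₁ y₂ hy₂)
    · exact lt_max_of_lt_left (h𝒰.separated p.1 hU hU' hUU x₁ hx₁ x₂ hx₂)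

end IsAsdimCover

theorem asdimLE_iff {n : ℕ} {X : Type*} [MetricSpace X] :
    AsdimLE n X ↔ ∀ d > (0 : ℝ), ∃ (𝒰 : Fin (n + 1) → Set (Set X)) (B : ℝ),
      IsAsdimCover 𝒰 d B :=
  forall₂_congr fun _ _ => exists₂_congr fun _ _ =>
    ⟨fun ⟨hc, hb, hs⟩ => ⟨hc, hb, hs⟩, fun ⟨hc, hb, hs⟩ => ⟨hc, hb, hs⟩⟩

/-- weaker product theorem: if `asdim X ≤ m` and `asdim Y ≤ n`,
then the product `X × Y` with the `ℓ∞` (max) metric (Mathlib's product metric)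
satisfies `asdim (X × Y) ≤ (m+1)(n+1) - 1`. -/
theorem statement4 {X Y : Type*} [MetricSpace X] [MetricSpace Y] (m n : ℕ)
    (hX : AsdimLE m X) (hY : AsdimLE n Y) :
    AsdimLE ((m + 1) * (n + 1) - 1) (X × Y) := by
  rw [asdimLE_iff] at hX hY ⊢
  intro d hd
  obtain ⟨𝒰, B, hU⟩ := hX d hd
  obtain ⟨𝒱, C, hV⟩ := hY d hd
  have hcard : (m + 1) * (n + 1) - 1 + 1 = (m + 1) * (n + 1) :=
    Nat.sub_add_cancel (Nat.mul_pos m.succ_pos n.succ_pos)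
  exact ⟨_, _, (hU.prod hV).comp_equiv ((finCongr hcard).trans finProdFinEquiv.symm)⟩
end

section
/- A metric tree (ℝ-tree, e.g. the geometric realization of a simplicial tree with edge lengths) has asymptotic dimension at most 1. -/
/-- `X` is a geodesic space: any two points are joined by an isometric image of
an interval. -/
def GeodesicSpace (X : Type*) [MetricSpace X] : Prop :=
  ∀ x y : X, ∃ f : ℝ → X, f 0 = x ∧ f (dist x y) = y ∧
    ∀ s ∈ Set.Icc (0 : ℝ) (dist x y), ∀ t ∈ Set.Icc (0 : ℝ) (dist x y),
      dist (f s) (f t) = |s - t|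

/-- `X` is 0-hyperbolic (four-point condition), so together with geodesicity
`X` is an ℝ-tree. -/
def ZeroHyperbolic (X : Type*) [MetricSpace X] : Prop :=
  ∀ x y z w : X,
    dist x y + dist z w ≤ max (dist x z + dist y w) (dist x w + dist y z)

section

variable {X : Type*} [MetricSpace X]

noncomputable def gromovProduct (w x y : X) : ℝ := (dist x w + dist y w - dist x y) / 2

lemma gromovProduct_comm (w x y : X) : gromovProduct w x y = gromovProduct w y x := by
  rw [gromovProduct, gromovProduct, dist_comm x y]; ring

lemma gromovProduct_self (w x : X) : gromovProduct w x x = dist x w := by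
  simp [gromovProduct]

lemma dist_eq_sub_gromovProduct (w x y : X) :
    dist x y = dist x w + dist y w - 2 * gromovProduct w x y := by
  rw [gromovProduct]; ring

lemma ZeroHyperbolic.le_gromovProduct_trans (htree : ZeroHyperbolic X) {w x y z : X} {t : ℝ}
    (hxy : t ≤ gromovProduct w x y) (hyz : t ≤ gromovProduct w y z) :
    t ≤ gromovProduct w x z := by
  have h := htree x z y w
  rw [dist_comm z y] at h
  simp only [gromovProduct] at *
  rcases le_max_iff.mp h with h | h <;> linarith

/-- The points of `A` whose geodesic from `w` follows the one to `x` for length at least `t`. -/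
def branch (A : Set X) (t : ℝ) (w x : X) : Set X := {y | y ∈ A ∧ t ≤ gromovProduct w x y}

namespace ZeroHyperbolic

variable (htree : ZeroHyperbolic X) {A : Set X} {t : ℝ} {w x x' y z : X}
include htree

lemma le_gromovProduct_of_mem_branch (hy : y ∈ branch A t w x) (hz : z ∈ branch A t w x) :
    t ≤ gromovProduct w y z :=
  htree.le_gromovProduct_trans (by rw [gromovProduct_comm]; exact hy.2) hz.2

lemma branch_eq_of_le_gromovProduct (hy : y ∈ branch A t w x) (hz : z ∈ branch A t w x')
    (hyz : t ≤ gromovProduct w y z) : branch A t w x = branch A t w x' := by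
  have hzx' : t ≤ gromovProduct w z x' := by rw [gromovProduct_comm]; exact hz.2
  have hxx' : t ≤ gromovProduct w x x' :=
    htree.le_gromovProduct_trans (htree.le_gromovProduct_trans hy.2 hyz) hzx'
  have hx'x : t ≤ gromovProduct w x' x := by rw [gromovProduct_comm]; exact hxx'
  ext u
  exact ⟨fun hu ↦ ⟨hu.1, htree.le_gromovProduct_trans hx'x hu.2⟩,
    fun hu ↦ ⟨hu.1, htree.le_gromovProduct_trans hxx' hu.2⟩⟩

end ZeroHyperbolic

def annulus (r : ℝ) (w : X) (k : ℕ) : Set X := {x | r * k ≤ dist x w ∧ dist x w < r * (k + 1)}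

lemma mem_annulus_floor {r : ℝ} (hr : 0 < r) (w x : X) : x ∈ annulus r w ⌊dist x w / r⌋₊ := by
  have hq : 0 ≤ dist x w / r := div_nonneg dist_nonneg hr.le
  constructor
  · calc r * ⌊dist x w / r⌋₊ ≤ r * (dist x w / r) := by gcongr; exact Nat.floor_le hq
      _ = dist x w := by field_simp
  · calc dist x w = r * (dist x w / r) := by field_simp
      _ < r * (⌊dist x w / r⌋₊ + 1) := by gcongr; exact Nat.lt_floor_add_one _

lemma lt_dist_of_mem_annulus {r : ℝ} {w x y : X} {k k' : ℕ} (hkk' : k + 2 ≤ k')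
    (hx : x ∈ annulus r w k) (hy : y ∈ annulus r w k') : r < dist x y := by
  have hk : (k : ℝ) + 2 ≤ k' := by exact_mod_cast hkk'
  have hr : 0 < r := by
    have : 0 < r * (k' + 1) := dist_nonneg.trans_lt hy.2
    exact pos_of_mul_pos_left this (by positivity)
  have := dist_triangle y x w
  nlinarith [hx.2, hy.1, dist_comm x y]

def annulusBranch (r : ℝ) (w : X) (k : ℕ) (x : X) : Set X :=
  branch (annulus r w k) (r * k - r / 2) w x

lemma self_mem_annulusBranch {r : ℝ} (hr : 0 ≤ r) {w x : X} {k : ℕ} (hx : x ∈ annulus r w k) :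
    x ∈ annulusBranch r w k x :=
  ⟨hx, by rw [gromovProduct_self]; linarith [hx.1]⟩

def annulusBranches (r : ℝ) (w : X) (i : ℕ) : Set (Set X) :=
  {U | ∃ k x, k % 2 = i ∧ U = annulusBranch r w k x}

namespace ZeroHyperbolic

variable (htree : ZeroHyperbolic X) {r : ℝ} {w x x' y z : X} {k : ℕ}
include htree

lemma dist_le_of_mem_annulusBranch (hy : y ∈ annulusBranch r w k x)
    (hz : z ∈ annulusBranch r w k x) : dist y z ≤ 3 * r := by
  have := htree.le_gromovProduct_of_mem_branch hy hz
  rw [dist_eq_sub_gromovProduct w]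
  linarith [hy.1.2, hz.1.2]

lemma lt_dist_of_mem_annulusBranch (hy : y ∈ annulusBranch r w k x)
    (hz : z ∈ annulusBranch r w k x') (hne : annulusBranch r w k x ≠ annulusBranch r w k x') :
    r < dist y z := by
  have hlt : gromovProduct w y z < r * k - r / 2 :=
    lt_of_not_ge fun hyz ↦ hne (htree.branch_eq_of_le_gromovProduct hy hz hyz)
  rw [dist_eq_sub_gromovProduct w]
  linarith [hy.1.1, hz.1.1]

lemma diam_le_and_isBounded_of_mem_annulusBranches (hr : 0 ≤ r) {i : ℕ} {U : Set X}
    (hU : U ∈ annulusBranches r w i) : Metric.diam U ≤ 3 * r ∧ Bornology.IsBounded U := by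
  obtain ⟨k, x, -, rfl⟩ := hU
  have h : ∀ y ∈ annulusBranch r w k x, ∀ z ∈ annulusBranch r w k x, dist y z ≤ 3 * r :=
    fun _ hy _ hz ↦ htree.dist_le_of_mem_annulusBranch hy hz
  exact ⟨Metric.diam_le_of_forall_dist_le (by positivity) h, Metric.isBounded_iff.2 ⟨_, h⟩⟩

lemma lt_dist_of_mem_annulusBranches {i : ℕ} {U V : Set X} (hU : U ∈ annulusBranches r w i)
    (hV : V ∈ annulusBranches r w i) (hUV : U ≠ V) (hy : y ∈ U) (hz : z ∈ V) : r < dist y z := by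
  obtain ⟨k, x, hk, rfl⟩ := hU
  obtain ⟨k', x', hk', rfl⟩ := hV
  rcases lt_trichotomy k k' with hlt | rfl | hgt
  · exact lt_dist_of_mem_annulus (by omega) hy.1 hz.1
  · exact htree.lt_dist_of_mem_annulusBranch hy hz hUV
  · rw [dist_comm]; exact lt_dist_of_mem_annulus (by omega) hz.1 hy.1

end ZeroHyperbolic

end

theorem statement6_general {X : Type*} [MetricSpace X]
    (htree : ZeroHyperbolic X) :
    AsdimLE 1 X := by
  intro d hd
  rcases isEmpty_or_nonempty X with _ | ⟨⟨w⟩⟩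
  · exact ⟨fun _ ↦ ∅, 0, isEmptyElim, by simp, by simp⟩
  refine ⟨fun i ↦ annulusBranches (2 * d) w i, 3 * (2 * d), fun x ↦ ?_,
    fun i U hU ↦ htree.diam_le_and_isBounded_of_mem_annulusBranches (by linarith) hU,
    fun i U hU V hV hUV y hy z hz ↦ (by linarith : d < 2 * d).trans
      (htree.lt_dist_of_mem_annulusBranches hU hV hUV hy hz)⟩
  set k := ⌊dist x w / (2 * d)⌋₊
  have hx : x ∈ annulus (2 * d) w k := mem_annulus_floor (by linarith) w x
  exact ⟨⟨k % 2, Nat.mod_lt _ two_pos⟩, annulusBranch (2 * d) w k x, ⟨k, x, rfl, rfl⟩,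
    self_mem_annulusBranch (by linarith) hx⟩

/-- An ℝ-tree (geodesic 0-hyperbolic metric space) has asymptotic
dimension at most 1. -/
theorem statement6 {X : Type*} [MetricSpace X]
    (hgeo : GeodesicSpace X) (htree : ZeroHyperbolic X) :
    AsdimLE 1 X :=
  statement6_general htree
end
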